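/- Let G = C_{q_1} ⊕ ⋯ ⊕ C_{q_t} ⊕ C_n where each q_i is a prime power dividing n. Then Σ_{i=1}^t (1/q_i)·[0, q_i−1] + W(C_n) ⊆ W(G), where W denotes the set of cross numbers of minimal zero-sum sequences and + denotes sumsets of sets of rationals. -/

import Mathlib

open Multiset Pointwise

/-- Cross number of a sequence (multiset) over an additive group. -/
noncomputable def crossNum {G : Type*} [AddCommGroup G] (S : Multiset G) : ℚ :=
  (S.map (fun g => (1 : ℚ) / (addOrderOf g : ℚ))).sum

/-- A sequence is zero-sum free if no non-empty subsequence sums to zero. -/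
def IsZeroSumFree {G : Type*} [AddCommGroup G] (S : Multiset G) : Prop :=
  ∀ T : Multiset G, T ≤ S → T ≠ 0 → T.sum ≠ (0 : G)

/-- A minimal zero-sum sequence: non-trivial, sum zero, no proper non-trivial
zero-sum subsequence. -/
def IsMinZeroSum {G : Type*} [AddCommGroup G] (S : Multiset G) : Prop :=
  S ≠ 0 ∧ S.sum = 0 ∧ ∀ T : Multiset G, T < S → T ≠ 0 → T.sum ≠ (0 : G)

/-- `wSet G` : set of cross numbers of non-trivial zero-sum free sequences over `G`. -/
def wSet (G : Type*) [AddCommGroup G] : Set ℚ :=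
  { k | ∃ S : Multiset G, S ≠ 0 ∧ IsZeroSumFree S ∧ crossNum S = k }

/-- `WSet G` : set of cross numbers of minimal zero-sum sequences over `G`. -/
def WSet (G : Type*) [AddCommGroup G] : Set ℚ :=
  { k | ∃ S : Multiset G, IsMinZeroSum S ∧ crossNum S = k }


set_option maxHeartbeats 1000000

section basic
variable {G : Type*} [AddCommGroup G]

lemma crossNum_add (S T : Multiset G) : crossNum (S + T) = crossNum S + crossNum T := by
  simp [crossNum]

lemma crossNum_cons (a : G) (S : Multiset G) :
    crossNum (a ::ₘ S) = 1 / (addOrderOf a : ℚ) + crossNum S := by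
  simp [crossNum]

lemma crossNum_replicate (k : ℕ) (a : G) :
    crossNum (replicate k a) = (k : ℚ) * (1 / (addOrderOf a : ℚ)) := by
  simp [crossNum, Multiset.map_replicate, Multiset.sum_replicate, nsmul_eq_mul]

lemma exists_decomp {α : Type*} (U A B : Multiset α) (h : U ≤ A + B) :
    ∃ U₁ U₂, U₁ ≤ A ∧ U₂ ≤ B ∧ U = U₁ + U₂ := by
  classical
  refine ⟨U - (U - A), U - A, ?_, ?_, ?_⟩
  · rw [Multiset.le_iff_count]; intro a
    simp only [Multiset.count_sub]; omega
  · rw [Multiset.le_iff_count] at h ⊢; intro a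
    have := h a; simp only [Multiset.count_sub, Multiset.count_add] at *; omega
  · rw [Multiset.le_iff_count] at h; ext a
    have := h a; simp only [Multiset.count_sub, Multiset.count_add] at *; omega

lemma sum_eq_zero_of_forall {M : Multiset G} (N : ℕ) (h : ∀ x ∈ M, N • x = 0) :
    N • M.sum = 0 := by
  induction M using Multiset.induction_on with
  | empty => simp
  | cons a s ih =>
    simp only [Multiset.sum_cons, smul_add]
    rw [h a (mem_cons_self a s), ih fun x hx => h x (mem_cons_of_mem hx), add_zero]

end basic

section pairord
variable {A B : Type*} [AddCommGroup A] [AddCommGroup B]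

lemma addOrderOf_pair_right (a : A) (b : B) (h : addOrderOf b • a = 0) :
    addOrderOf (a, b) = addOrderOf b := by
  refine Nat.dvd_antisymm ?_ ?_
  · rw [addOrderOf_dvd_iff_nsmul_eq_zero, Prod.smul_mk, h, addOrderOf_nsmul_eq_zero]
    rfl
  · rw [addOrderOf_dvd_iff_nsmul_eq_zero]
    have := addOrderOf_nsmul_eq_zero (a, b)
    rw [Prod.smul_mk, Prod.mk_eq_zero] at this
    exact this.2

lemma addOrderOf_pair_left (a : A) : addOrderOf (a, (0 : B)) = addOrderOf a := by
  refine Nat.dvd_antisymm ?_ ?_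
  · rw [addOrderOf_dvd_iff_nsmul_eq_zero, Prod.smul_mk, smul_zero, addOrderOf_nsmul_eq_zero]
    rfl
  · rw [addOrderOf_dvd_iff_nsmul_eq_zero]
    have := addOrderOf_nsmul_eq_zero (a, (0:B))
    rw [Prod.smul_mk, Prod.mk_eq_zero] at this
    exact this.1
end pairord

lemma nsmul_natCast (n : ℕ) (N c : ℕ) : N • ((c : ℕ) : ZMod n) = ((N * c : ℕ) : ZMod n) := by
  push_cast
  rw [nsmul_eq_mul]

lemma exists_root (n : ℕ) [NeZero n] (g : ZMod n) (N : ℕ) (hN : 0 < N)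
    (hdvd : N * addOrderOf g ∣ n) :
    ∃ x : ZMod n, N • x = g ∧ addOrderOf x = N * addOrderOf g := by
  have hn0 : n ≠ 0 := NeZero.ne n
  set d := addOrderOf g with hd
  have hdpos : 0 < d := (isOfFinAddOrder_of_finite g).addOrderOf_pos
  have hddvd : d ∣ n := dvd_trans (Dvd.intro_left N rfl) hdvd
  have hval : ((g.val : ℕ) : ZMod n) = g := ZMod.natCast_rightInverse g
  have hord : d = n / n.gcd g.val := by
    conv_lhs => rw [hd, ← hval]
    rw [ZMod.addOrderOf_coe _ hn0]
  have hgcddvd : n.gcd g.val ∣ n := Nat.gcd_dvd_left _ _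
  have hgcd : n.gcd g.val = n / d := by
    rw [hord, Nat.div_div_self hgcddvd hn0]
  have hndd : n / d ∣ g.val := hgcd ▸ Nat.gcd_dvd_right _ _
  obtain ⟨b, hb⟩ := hndd
  have hmul : n / d * d = n := Nat.div_mul_cancel hddvd
  have hnd0 : 0 < n / d := Nat.div_pos (Nat.le_of_dvd (Nat.pos_of_ne_zero hn0) hddvd) hdpos
  have hcop : Nat.Coprime d b := by
    have h2 : n.gcd g.val = (n/d) * Nat.gcd d b := by
      calc n.gcd g.val = Nat.gcd ((n/d)*d) ((n/d)*b) := by rw [hmul, ← hb]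
      _ = _ := Nat.gcd_mul_left _ _ _
    have h3 : (n/d) * 1 = (n/d) * Nat.gcd d b := by rw [Nat.mul_one, ← h2, hgcd]
    exact (Nat.eq_of_mul_eq_mul_left hnd0 h3).symm
  -- lift b to unit mod N*d
  have hNd0 : N * d ≠ 0 := by positivity
  haveI : NeZero (N * d) := ⟨hNd0⟩
  have hdNd : d ∣ N * d := Dvd.intro_left N rfl
  obtain ⟨u, hu⟩ := ZMod.unitsMap_surjective hdNd (ZMod.unitOfCoprime b hcop.symm)
  set s := ((u : ZMod (N*d)).val) with hs
  have hscop : Nat.Coprime s (N * d) := ZMod.val_coe_unit_coprime u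
  have hsu : ((s : ℕ) : ZMod (N*d)) = (u : ZMod (N*d)) := ZMod.natCast_rightInverse _
  have hsb : (s : ZMod d) = (b : ZMod d) := by
    have h4 : ((ZMod.unitsMap hdNd u : (ZMod d)ˣ) : ZMod d) = ZMod.castHom hdNd (ZMod d) (u : ZMod (N*d)) := rfl
    rw [hu] at h4
    rw [ZMod.coe_unitOfCoprime] at h4
    rw [← hsu] at h4
    rw [map_natCast] at h4
    exact h4.symm
  have hsbmod : s ≡ b [MOD d] := (ZMod.natCast_eq_natCast_iff _ _ _).mp hsb
  -- define x
  refine ⟨((n / (N*d) * s : ℕ) : ZMod n), ?_, ?_⟩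
  · -- N • x = g
    rw [nsmul_natCast]
    have hNdn : n / (N*d) * (N*d) = n := Nat.div_mul_cancel hdvd
    have h5 : N * (n / (N*d) * s) = n/d * s := by
      have : N * (n / (N * d)) = n / d := by
        obtain ⟨k, hk⟩ := hdvd
        have h6 : n / d = N * k := by
          rw [hk, show N*d*k = N*k*d by ring, Nat.mul_div_cancel _ hdpos]
        have h7 : n / (N*d) = k := by
          rw [hk, Nat.mul_div_cancel_left _ (by positivity : 0 < N*d)]
        rw [h6, h7]
      rw [← Nat.mul_assoc, this]
    rw [h5]
    have h7 : n/d * s ≡ n/d * b [MOD n] := by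
      have := Nat.ModEq.mul_left' (c := n/d) hsbmod
      rwa [hmul] at this
    calc ((n/d * s : ℕ) : ZMod n) = ((n/d * b : ℕ) : ZMod n) := (ZMod.natCast_eq_natCast_iff _ _ _).mpr h7
    _ = g := by rw [← hb, hval]
  · -- order
    rw [ZMod.addOrderOf_coe _ hn0]
    have hNdn : n / (N*d) * (N*d) = n := Nat.div_mul_cancel hdvd
    have h8 : n.gcd (n / (N*d) * s) = n / (N*d) := by
      calc n.gcd (n / (N*d) * s) = Nat.gcd (n/(N*d) * (N*d)) (n/(N*d) * s) := by rw [hNdn]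
      _ = n/(N*d) * Nat.gcd (N*d) s := Nat.gcd_mul_left _ _ _
      _ = n/(N*d) * 1 := by rw [Nat.Coprime.gcd_eq_one hscop.symm]
      _ = _ := Nat.mul_one _
    rw [h8, Nat.div_div_self hdvd hn0]

lemma expansion_step {n : ℕ} [NeZero n] {S : Multiset (ZMod n)} (hS : IsMinZeroSum S)
    {p e : ℕ} (hp : Nat.Prime p) (he : 0 < e) (hpen : p ^ e ∣ n)
    (hobs : ∀ g ∈ S, ¬ (p ^ e ∣ addOrderOf g)) :
    ∃ S' : Multiset (ZMod n), IsMinZeroSum S' ∧ crossNum S' = crossNum S ∧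
      (∃ x ∈ S', p ^ e ∣ addOrderOf x) ∧
      (∀ g ∈ S, ∃ g' ∈ S', addOrderOf g ∣ addOrderOf g') := by
  classical
  obtain ⟨hS0, hSsum, hSmin⟩ := hS
  have hn0 : n ≠ 0 := NeZero.ne n
  -- pick maximal p-valuation element
  have hfin : S.toFinset.Nonempty := Multiset.toFinset_nonempty.mpr hS0
  obtain ⟨gs, hgsF, hmax'⟩ := Finset.exists_max_image S.toFinset
    (fun g => (addOrderOf g).factorization p) hfin
  have hgsS : gs ∈ S := Multiset.mem_toFinset.mp hgsF
  set d := addOrderOf gs with hd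
  set v := d.factorization p with hv
  have hmax : ∀ h ∈ S, (addOrderOf h).factorization p ≤ v :=
    fun h hh => hmax' h (Multiset.mem_toFinset.mpr hh)
  have hdpos : 0 < d := (isOfFinAddOrder_of_finite gs).addOrderOf_pos
  have hddvd : d ∣ n := by
    have := addOrderOf_dvd_card (x := gs)
    rwa [ZMod.card] at this
  have hvlt : v < e := by
    by_contra hcon
    refine hobs gs hgsS ((Nat.Prime.pow_dvd_iff_le_factorization hp (by omega)).mpr ?_)
    rw [← hd, ← hv]; omega
  set c := e - v with hc
  have hcpos : 0 < c := by omega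
  set N := p ^ c with hN
  have hNpos : 0 < N := Nat.pow_pos hp.pos
  have hpv_dvd_d : p ^ v ∣ d := Nat.ordProj_dvd d p
  have hpe_dvd_Nd : p ^ e ∣ N * d := by
    have : p ^ e = p ^ c * p ^ v := by rw [← pow_add]; congr 1; omega
    rw [this]
    exact Nat.mul_dvd_mul_left _ hpv_dvd_d
  have hNd_dvd_n : N * d ∣ n := by
    have hNd0 : N * d ≠ 0 := by positivity
    rw [← Nat.factorization_le_iff_dvd hNd0 hn0]
    rw [Finsupp.le_def]
    intro l
    rw [Nat.factorization_mul (by positivity) (by omega)]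
    rw [Finsupp.add_apply]
    have hdfac : d.factorization ≤ n.factorization :=
      (Nat.factorization_le_iff_dvd (by omega) hn0).mpr hddvd
    by_cases hl : l = p
    · rw [hl, hN, hp.factorization_pow, Finsupp.single_eq_same]
      have hen : e ≤ n.factorization p :=
        (Nat.Prime.pow_dvd_iff_le_factorization hp hn0).mp hpen
      rw [← hv]; omega
    · rw [hN, hp.factorization_pow, Finsupp.single_eq_of_ne' (Ne.symm hl)]
      have := hdfac l
      omega
  obtain ⟨x, hxsmul, hxord⟩ := exists_root n gs N hNpos hNd_dvd_n
  set S0 := S.erase gs with hS0def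
  have hcons : gs ::ₘ S0 = S := Multiset.cons_erase hgsS
  have hsum0 : gs + S0.sum = 0 := by
    rw [← Multiset.sum_cons, hcons, hSsum]
  refine ⟨replicate N x + S0, ⟨?_, ?_, ?_⟩, ?_, ?_, ?_⟩
  · -- nonzero
    intro hcon
    have hcard := congrArg Multiset.card hcon
    rw [Multiset.card_add, Multiset.card_replicate, Multiset.card_zero] at hcard
    omega
  · -- sum
    rw [Multiset.sum_add, Multiset.sum_replicate, hxsmul, hsum0]
  · -- minimality
    intro U hUlt hU0 hUsum
    obtain ⟨U1, U2, h1, h2, hU12⟩ := exists_decomp U (replicate N x) S0 hUlt.le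
    have hU1rep : U1 = replicate (Multiset.card U1) x :=
      Multiset.eq_replicate_card.mpr (fun b hb => Multiset.eq_of_mem_replicate (Multiset.mem_of_le h1 hb))
    set rho := Multiset.card U1 with hrho
    have hrhole : rho ≤ N := by
      have := Multiset.card_le_card h1
      rwa [Multiset.card_replicate] at this
    -- the modulus M
    set M := (n / p ^ (n.factorization p)) * p ^ v with hM
    have hMkill : ∀ h ∈ S, addOrderOf h ∣ M := by
      intro h hh
      set oh := addOrderOf h with hoh
      have hohpos : 0 < oh := (isOfFinAddOrder_of_finite h).addOrderOf_pos
      have hohdvd : oh ∣ n := by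
        have := addOrderOf_dvd_card (x := h); rwa [ZMod.card] at this
      have hdecomp : p ^ (oh.factorization p) * (oh / p ^ (oh.factorization p)) = oh :=
        Nat.ordProj_mul_ordCompl_eq_self oh p
      have h1' : p ^ (oh.factorization p) ∣ p ^ v := pow_dvd_pow p (by rw [hv, hd]; exact hmax h hh)
      have h2' : oh / p ^ (oh.factorization p) ∣ n / p ^ (n.factorization p) :=
        Nat.ordCompl_dvd_ordCompl_of_dvd hohdvd p
      calc oh = (oh / p ^ (oh.factorization p)) * p ^ (oh.factorization p) := by rw [Nat.mul_comm, hdecomp]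
      _ ∣ (n / p ^ (n.factorization p)) * p ^ v := Nat.mul_dvd_mul h2' h1'
    have hMU2 : M • U2.sum = 0 := by
      apply sum_eq_zero_of_forall
      intro y hy
      rw [← addOrderOf_dvd_iff_nsmul_eq_zero]
      exact hMkill y (Multiset.mem_of_le (le_trans h2 (Multiset.erase_le gs S)) hy)
    have hsum' : rho • x + U2.sum = 0 := by
      rw [hU12, Multiset.sum_add] at hUsum
      rw [hU1rep, Multiset.sum_replicate] at hUsum
      exact hUsum
    have hMrho : (M * rho) • x = 0 := by
      have := congrArg (fun z => M • z) hsum'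
      simp only [smul_add, smul_zero, hMU2, add_zero] at this
      rwa [smul_smul] at this
    have hdvdMrho : N * d ∣ M * rho := by
      rw [← hxord]
      exact addOrderOf_dvd_iff_nsmul_eq_zero.mpr hMrho
    have hpc_rho : p ^ c ∣ rho := by
      have hstep1 : p ^ v * p ^ c ∣ p ^ v * (n / p ^ (n.factorization p) * rho) := by
        calc p ^ v * p ^ c ∣ d * p ^ c := Nat.mul_dvd_mul_right hpv_dvd_d _
        _ = N * d := by rw [Nat.mul_comm]
        _ ∣ M * rho := hdvdMrho
        _ = p ^ v * (n / p ^ (n.factorization p) * rho) := by ring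
      have hstep2 : p ^ c ∣ n / p ^ (n.factorization p) * rho :=
        (Nat.mul_dvd_mul_iff_left (Nat.pow_pos hp.pos : 0 < p ^ v)).mp hstep1
      have hcop : Nat.Coprime (p ^ c) (n / p ^ (n.factorization p)) :=
        Nat.Coprime.pow_left _ (Nat.coprime_ordCompl hp hn0)
      exact hcop.dvd_of_dvd_mul_left hstep2
    have hrho_cases : rho = 0 ∨ rho = N := by
      rcases Nat.eq_zero_or_pos rho with h | h
      · left; exact h
      · right
        have := Nat.le_of_dvd h hpc_rho
        rw [← hN] at hpc_rho  -- fix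
        omega
    rcases hrho_cases with hr0 | hrN
    · -- rho = 0
      have hU1z : U1 = 0 := by rw [hU1rep, hr0, Multiset.replicate_zero]
      have hUeq : U = U2 := by rw [hU12, hU1z, zero_add]
      have hUltS : U < S := by
        rw [hUeq]
        exact lt_of_le_of_lt h2 (by rw [← hcons]; exact Multiset.lt_cons_self S0 gs)
      exact hSmin U hUltS hU0 hUsum
    · -- rho = N
      have hU1g : U1.sum = gs := by
        rw [hU1rep, Multiset.sum_replicate, hrN, hxsmul]
      have hcsum : (gs ::ₘ U2).sum = 0 := by
        rw [Multiset.sum_cons, ← hxsmul, ← hrN]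
        exact hsum'
      have hle : gs ::ₘ U2 ≤ S := by
        rw [← hcons]
        exact Multiset.cons_le_cons _ h2
      rcases lt_or_eq_of_le hle with hlt | heq
      · exact hSmin _ hlt (Multiset.cons_ne_zero) hcsum
      · have hU2eq : U2 = S0 := by
          have : gs ::ₘ U2 = gs ::ₘ S0 := by rw [heq, hcons]
          exact (Multiset.cons_inj_right gs).mp this
        apply absurd hUlt
        rw [hU12, hU1rep, hrN, hU2eq]
        exact lt_irrefl _
  · -- crossNum
    have : crossNum S = 1 / (d : ℚ) + crossNum S0 := by
      rw [← hcons, crossNum_cons, hd]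
    rw [crossNum_add, crossNum_replicate, hxord, this, ← hd]
    have hdQ : (d : ℚ) ≠ 0 := by positivity
    have hNQ : (N : ℚ) ≠ 0 := by positivity
    push_cast
    field_simp
  · -- new witness
    refine ⟨x, ?_, ?_⟩
    · exact Multiset.mem_add.mpr (Or.inl (Multiset.mem_replicate.mpr ⟨by omega, rfl⟩))
    · rw [hxord]; exact hpe_dvd_Nd
  · -- preservation
    intro g hg
    by_cases hgerase : g ∈ S0
    · exact ⟨g, Multiset.mem_add.mpr (Or.inr hgerase), dvd_rfl⟩
    · have hggs : g = gs := by
        by_contra hne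
        exact hgerase (Multiset.mem_erase_of_ne hne |>.mpr hg)
      refine ⟨x, Multiset.mem_add.mpr (Or.inl (Multiset.mem_replicate.mpr ⟨by omega, rfl⟩)), ?_⟩
      rw [hxord, hggs]
      exact Dvd.intro_left N rfl

section lift
variable {n : ℕ} [NeZero n] {t : ℕ} {q : Fin t → ℕ}

lemma fst_multiset_sum {A B : Type*} [AddCommMonoid A] [AddCommMonoid B]
    (M : Multiset (A × B)) : M.sum.1 = (M.map Prod.fst).sum := by
  induction M using Multiset.induction_on with
  | empty => simp
  | cons a s ih => simp [ih]

lemma snd_multiset_sum {A B : Type*} [AddCommMonoid A] [AddCommMonoid B]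
    (M : Multiset (A × B)) : M.sum.2 = (M.map Prod.snd).sum := by
  induction M using Multiset.induction_on with
  | empty => simp
  | cons a s ih => simp [ih]

lemma zmod_dvd_smul_zero {m M : ℕ} (y : ZMod m) (h : m ∣ M) : M • y = 0 := by
  rw [nsmul_eq_mul, (ZMod.natCast_eq_zero_iff M m).mpr h, zero_mul]

lemma exists_W (q : Fin t → ℕ) (j : Fin t → ℕ) (S : Multiset (ZMod n))
    (hwit : ∀ i, ∃ g ∈ S, q i ∣ addOrderOf g) (m : Multiset (Fin t)) :
    ∃ W : Multiset ((∀ i, ZMod (q i)) × ZMod n),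
      W.map Prod.snd = S ∧
      (∀ w ∈ W, ∀ i, addOrderOf w.2 • (w.1 i) = 0) ∧
      W.sum.1 = - (m.map (fun i => (j i) • Pi.single i (1 : ZMod (q i)))).sum := by
  classical
  induction m using Multiset.induction_on with
  | empty =>
    refine ⟨S.map (fun g => (0, g)), ?_, ?_, ?_⟩
    · rw [Multiset.map_map]; simp
    · intro w hw i
      obtain ⟨g, _, rfl⟩ := Multiset.mem_map.mp hw
      simp
    · rw [fst_multiset_sum, Multiset.map_map]
      simp
  | cons i m ih =>
    obtain ⟨W, hsnd, hdvd, hsum⟩ := ih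
    obtain ⟨g, hgS, hgdvd⟩ := hwit i
    have hgW : g ∈ W.map Prod.snd := by rw [hsnd]; exact hgS
    obtain ⟨wel, hwW, hw2⟩ := Multiset.mem_map.mp hgW
    set c : (∀ i, ZMod (q i)) := (j i) • Pi.single i (1 : ZMod (q i)) with hc
    set wel' : (∀ i, ZMod (q i)) × ZMod n := (wel.1 - c, wel.2) with hwel'
    have hconsW : wel ::ₘ W.erase wel = W := Multiset.cons_erase hwW
    refine ⟨wel' ::ₘ W.erase wel, ?_, ?_, ?_⟩
    · rw [Multiset.map_cons]
      have : wel'.2 = wel.2 := rfl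
      rw [this, ← Multiset.map_cons, hconsW, hsnd]
    · intro w hw i'
      rcases Multiset.mem_cons.mp hw with rfl | hw'
      · show addOrderOf wel.2 • ((wel.1 - c) i') = 0
        rw [Pi.sub_apply, smul_sub, hdvd wel hwW i', zero_sub, neg_eq_zero, hc]
        rw [Pi.smul_apply]
        by_cases hii : i' = i
        · subst hii
          rw [Pi.single_eq_same]
          exact zmod_dvd_smul_zero _ (by rw [hw2]; exact hgdvd)
        · rw [Pi.single_eq_of_ne hii, smul_zero, smul_zero]
      · exact hdvd w (Multiset.mem_of_mem_erase hw') i'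
    · have herase : (W.erase wel).sum = W.sum - wel := by
        conv_rhs => rw [← hconsW]
        rw [Multiset.sum_cons]
        abel
      rw [Multiset.sum_cons, herase, Multiset.map_cons, Multiset.sum_cons]
      have h1 : (wel' + (W.sum - wel)).1 = W.sum.1 - c := by
        rw [hwel']
        show wel.1 - c + (W.sum.1 - wel.1) = W.sum.1 - c
        abel
      rw [h1, hsum]
      abel
end lift

lemma exp_all {n : ℕ} [NeZero n] {t : ℕ} (q : Fin t → ℕ) (hq : ∀ i, IsPrimePow (q i))
    (hqn : ∀ i, q i ∣ n) {S : Multiset (ZMod n)} (hS : IsMinZeroSum S) (m : Multiset (Fin t)) :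
    ∃ S' : Multiset (ZMod n), IsMinZeroSum S' ∧ crossNum S' = crossNum S ∧
      ∀ i ∈ m, ∃ g ∈ S', q i ∣ addOrderOf g := by
  induction m using Multiset.induction_on with
  | empty => exact ⟨S, hS, rfl, by simp⟩
  | cons i m ih =>
    obtain ⟨S', h1, h2, h3⟩ := ih
    by_cases hw : ∃ g ∈ S', q i ∣ addOrderOf g
    · refine ⟨S', h1, h2, ?_⟩
      intro i' hi'
      rcases Multiset.mem_cons.mp hi' with rfl | hi'
      · exact hw
      · exact h3 i' hi'
    · obtain ⟨p, e, hp, he, hpe⟩ := hq i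
      have hp' : Nat.Prime p := Nat.prime_iff.mpr hp
      have hpen : p ^ e ∣ n := by rw [hpe]; exact hqn i
      have hobs : ∀ g ∈ S', ¬ (p ^ e ∣ addOrderOf g) := by
        intro g hg hdvd
        exact hw ⟨g, hg, by rw [← hpe]; exact hdvd⟩
      obtain ⟨S'', hS'', hcross, ⟨x, hxmem, hxdvd⟩, hpres⟩ := expansion_step h1 hp' he hpen hobs
      refine ⟨S'', hS'', by rw [hcross, h2], ?_⟩
      intro i' hi'
      rcases Multiset.mem_cons.mp hi' with rfl | hi'
      · exact ⟨x, hxmem, by rw [← hpe]; exact hxdvd⟩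
      · obtain ⟨g, hg, hgdvd⟩ := h3 i' hi'
        obtain ⟨g', hg', hdvd'⟩ := hpres g hg
        exact ⟨g', hg', dvd_trans hgdvd hdvd'⟩

section main
variable {t : ℕ} {q : Fin t → ℕ}

lemma multiset_sum_finset_sum {ι M : Type*} [AddCommMonoid M] (s : Finset ι) (f : ι → Multiset M) :
    (∑ i ∈ s, f i).sum = ∑ i ∈ s, (f i).sum := by
  induction s using Finset.cons_induction with
  | empty => simp
  | cons a s ha ih => simp [Finset.sum_cons, ih]

lemma crossNum_finset_sum {G : Type*} [AddCommGroup G] (s : Finset (Fin t)) (f : Fin t → Multiset G) :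
    crossNum (∑ i ∈ s, f i) = ∑ i ∈ s, crossNum (f i) := by
  induction s using Finset.cons_induction with
  | empty => simp [crossNum]
  | cons a s ha ih => rw [Finset.sum_cons, crossNum_add, ih, Finset.sum_cons]

lemma ord_single (h2 : ∀ i, 2 ≤ q i) (i : Fin t) :
    addOrderOf (Pi.single i (1 : ZMod (q i)) : ∀ k, ZMod (q k)) = q i := by
  refine Nat.dvd_antisymm ?_ ?_
  · rw [addOrderOf_dvd_iff_nsmul_eq_zero]
    funext i'
    rw [Pi.smul_apply]
    by_cases hii : i' = i
    · subst hii; rw [Pi.single_eq_same]; exact zmod_dvd_smul_zero _ dvd_rfl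
    · rw [Pi.single_eq_of_ne hii, smul_zero]; rfl
  · have := addOrderOf_nsmul_eq_zero (Pi.single i (1 : ZMod (q i)) : ∀ k, ZMod (q k))
    have h := congrFun this i
    rw [Pi.smul_apply, Pi.single_eq_same] at h
    have h' : addOrderOf (1 : ZMod (q i)) ∣ addOrderOf (Pi.single i (1 : ZMod (q i)) : ∀ k, ZMod (q k)) :=
      addOrderOf_dvd_iff_nsmul_eq_zero.mpr h
    rwa [ZMod.addOrderOf_one] at h'

lemma eval_single_sum (f : Fin t → ℕ) (i0 : Fin t) :
    (∑ i, (f i) • Pi.single i (1 : ZMod (q i)) : ∀ k, ZMod (q k)) i0 = ((f i0 : ℕ) : ZMod (q i0)) := by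
  classical
  rw [Finset.sum_apply]
  rw [Finset.sum_eq_single i0]
  · rw [Pi.smul_apply, Pi.single_eq_same, nsmul_eq_mul, mul_one]
  · intro i _ hne
    rw [Pi.smul_apply, Pi.single_eq_of_ne (Ne.symm hne), smul_zero]
  · intro h; exact absurd (Finset.mem_univ i0) h

theorem stmt8 (t : ℕ) (q : Fin t → ℕ) (n : ℕ) (hn : 2 ≤ n)
    (hq : ∀ i, IsPrimePow (q i)) (hqn : ∀ i, q i ∣ n) :
    ∀ w ∈ WSet (ZMod n), ∀ j : Fin t → ℕ, (∀ i, j i ≤ q i - 1) →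
      w + ∑ i, ((j i : ℚ) / (q i : ℚ)) ∈ WSet ((∀ i, ZMod (q i)) × ZMod n) := by
  classical
  intro w hw j hj
  obtain ⟨S, hS, hcrossS⟩ := hw
  haveI : NeZero n := ⟨by omega⟩
  have h2 : ∀ i, 2 ≤ q i := fun i => (hq i).two_le
  have hjlt : ∀ i, j i < q i := fun i => by have := h2 i; have := hj i; omega
  obtain ⟨S', hS', hcrossS', hwitm⟩ := exp_all q hq hqn hS Finset.univ.val
  have hwit : ∀ i, ∃ g ∈ S', q i ∣ addOrderOf g := fun i => hwitm i (Finset.mem_univ i)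
  obtain ⟨W, hWsnd, hWdvd, hWsum1⟩ := exists_W q j S' hwit Finset.univ.val
  set a : Fin t → ((∀ i, ZMod (q i)) × ZMod n) :=
    fun i => (Pi.single i (1 : ZMod (q i)), (0 : ZMod n)) with ha
  have hainj : Function.Injective a := by
    intro i i' hii
    by_contra hne
    have h1 : (Pi.single i (1 : ZMod (q i)) : ∀ k, ZMod (q k)) = Pi.single i' 1 :=
      congrArg Prod.fst hii
    have h2' := congrFun h1 i
    rw [Pi.single_eq_same, Pi.single_eq_of_ne hne] at h2'
    haveI : Fact (1 < q i) := ⟨h2 i⟩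
    exact one_ne_zero h2'
  have horda : ∀ i, addOrderOf (a i) = q i := fun i => by
    rw [ha]; rw [addOrderOf_pair_left, ord_single h2]
  set E : Multiset ((∀ i, ZMod (q i)) × ZMod n) := ∑ i, replicate (j i) (a i) with hE
  -- sum of E-type multisets
  have hsumfam : ∀ f : Fin t → ℕ,
      (∑ i, replicate (f i) (a i) : Multiset ((∀ i, ZMod (q i)) × ZMod n)).sum = ∑ i, ((f i) • a i) := by
    intro f
    rw [multiset_sum_finset_sum]
    congr 1; funext i; rw [Multiset.sum_replicate]
  have hsumfam1 : ∀ f : Fin t → ℕ,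
      (∑ i, replicate (f i) (a i) : Multiset ((∀ i, ZMod (q i)) × ZMod n)).sum.1
        = ∑ i, (f i) • Pi.single i (1 : ZMod (q i)) := by
    intro f
    rw [hsumfam f, Prod.fst_sum]
    refine Finset.sum_congr rfl fun c _ => ?_
    rw [Prod.smul_fst]
  have hsumfam2 : ∀ f : Fin t → ℕ,
      (∑ i, replicate (f i) (a i) : Multiset ((∀ i, ZMod (q i)) × ZMod n)).sum.2 = 0 := by
    intro f
    rw [hsumfam f, Prod.snd_sum]
    apply Finset.sum_eq_zero
    intro i _
    show ((f i) • a i).2 = 0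
    rw [ha]; show (f i) • (0 : ZMod n) = 0; rw [smul_zero]
  have hWsum1' : W.sum.1 = - ∑ i, (j i) • Pi.single i (1 : ZMod (q i)) := hWsum1
  have hWsum2 : W.sum.2 = 0 := by
    rw [snd_multiset_sum, hWsnd, hS'.2.1]
  refine ⟨E + W, ⟨?_, ?_, ?_⟩, ?_⟩
  · -- nonzero
    intro hcon
    have : W = 0 := by
      have hc := congrArg Multiset.card hcon
      rw [Multiset.card_add, Multiset.card_zero] at hc
      exact Multiset.card_eq_zero.mp (by omega)
    rw [this, Multiset.map_zero] at hWsnd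
    exact hS'.1 hWsnd.symm
  · -- sum zero
    rw [Multiset.sum_add]
    have e1 : (E.sum + W.sum).1 = 0 := by
      rw [Prod.fst_add, hE, hsumfam1 j, hWsum1']
      abel
    have e2 : (E.sum + W.sum).2 = 0 := by
      rw [Prod.snd_add, hE, hsumfam2 j, hWsum2, add_zero]
    exact Prod.ext e1 e2
  · -- minimality
    intro U hUlt hU0 hUsum
    obtain ⟨UE, UW, hUE, hUW, hUeq⟩ := exists_decomp U E W hUlt.le
    set k : Fin t → ℕ := fun i => UE.count (a i) with hk
    have hcountE : ∀ i, E.count (a i) = j i := by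
      intro i
      rw [hE, Multiset.count_sum']
      rw [Finset.sum_eq_single i]
      · rw [Multiset.count_replicate, if_pos rfl]
      · intro b _ hbne
        rw [Multiset.count_replicate, if_neg (fun hcc => hbne (hainj hcc))]
      · intro h; exact absurd (Finset.mem_univ i) h
    have hkj : ∀ i, k i ≤ j i := by
      intro i
      rw [hk, ← hcountE i]
      exact Multiset.count_le_of_le _ hUE
    have hUEdesc : UE = ∑ i, replicate (k i) (a i) := by
      ext x
      rw [Multiset.count_sum']
      by_cases hx : ∃ i0, x = a i0
      · obtain ⟨i0, rfl⟩ := hx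
        rw [Finset.sum_eq_single i0]
        · rw [Multiset.count_replicate, if_pos rfl]
        · intro b _ hbne
          rw [Multiset.count_replicate, if_neg (fun hcc => hbne (hainj hcc))]
        · intro h; exact absurd (Finset.mem_univ i0) h
      · have hxE : x ∉ UE := by
          intro hmem
          have : x ∈ E := Multiset.mem_of_le hUE hmem
          rw [hE] at this
          obtain ⟨i1, _, hmem2⟩ := Multiset.mem_sum.mp this
          exact hx ⟨i1, Multiset.eq_of_mem_replicate hmem2⟩
        rw [Multiset.count_eq_zero.mpr hxE]
        symm
        apply Finset.sum_eq_zero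
        intro i _
        rw [Multiset.count_replicate, if_neg (fun hcc => hx ⟨i, hcc.symm⟩)]
    have hUE2 : UE.sum.2 = 0 := by rw [hUEdesc]; exact hsumfam2 k
    have hUsum2 : (UW.map Prod.snd).sum = 0 := by
      have := congrArg Prod.snd hUsum
      rw [hUeq, Multiset.sum_add, Prod.snd_add, hUE2, zero_add, snd_multiset_sum UW] at this
      simp only [Prod.snd_zero] at this
      exact this
    have hVle : UW.map Prod.snd ≤ S' := hWsnd ▸ Multiset.map_le_map hUW
    have hVcases : UW.map Prod.snd = 0 ∨ UW.map Prod.snd = S' := by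
      by_cases hV0 : UW.map Prod.snd = 0
      · exact Or.inl hV0
      · right
        rcases lt_or_eq_of_le hVle with hlt | heq
        · exact absurd hUsum2 (hS'.2.2 _ hlt hV0)
        · exact heq
    rcases hVcases with hV0 | hVS
    · -- UW = 0, then U = UE and all k i = 0
      have hUW0 : UW = 0 := Multiset.map_eq_zero.mp hV0
      have hUeq' : U = UE := by rw [hUeq, hUW0, add_zero]
      have hk0 : ∀ i, k i = 0 := by
        intro i
        have h1 := congrArg Prod.fst hUsum
        simp only [Prod.fst_zero] at h1
        rw [hUeq', hUEdesc, hsumfam1 k] at h1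
        have h2' := congrFun h1 i
        rw [eval_single_sum k i] at h2'
        simp only [Pi.zero_apply] at h2'
        have h3 : q i ∣ k i := (ZMod.natCast_eq_zero_iff _ _).mp h2'
        have h4 : k i < q i := lt_of_le_of_lt (hkj i) (hjlt i)
        exact Nat.eq_zero_of_dvd_of_lt h3 h4 |> fun hcc => by
          rcases Nat.eq_zero_or_pos (k i) with hz | hz
          · exact hz
          · exact absurd (Nat.le_of_dvd hz h3) (by omega)
      have hUE0 : UE = 0 := by
        rw [hUEdesc]
        apply Finset.sum_eq_zero
        intro i _
        rw [hk0 i, Multiset.replicate_zero]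
      exact hU0 (by rw [hUeq', hUE0])
    · -- UW = W
      have hUWW : UW = W := by
        apply Multiset.eq_of_le_of_card_le hUW
        have h1 : Multiset.card (UW.map Prod.snd) = Multiset.card S' := by rw [hVS]
        have h2' : Multiset.card (W.map Prod.snd) = Multiset.card S' := by rw [hWsnd]
        rw [Multiset.card_map] at h1 h2'
        omega
      have hkj' : ∀ i, k i = j i := by
        intro i
        have h1 := congrArg Prod.fst hUsum
        simp only [Prod.fst_zero] at h1
        rw [hUeq, Multiset.sum_add, Prod.fst_add, hUWW, hWsum1', hUEdesc, hsumfam1 k] at h1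
        have h2' := congrFun h1 i
        simp only [Pi.add_apply, Pi.neg_apply, Pi.zero_apply] at h2'
        rw [eval_single_sum k i, eval_single_sum j i] at h2'
        have h3 : ((k i : ℕ) : ZMod (q i)) = ((j i : ℕ) : ZMod (q i)) := by
          have h5 := congrArg (fun z => z + ((j i : ℕ) : ZMod (q i))) h2'
          simpa using h5
        have h4 : k i ≡ j i [MOD q i] := (ZMod.natCast_eq_natCast_iff _ _ _).mp h3
        have h5 := Nat.ModEq.eq_of_lt_of_lt h4 (lt_of_le_of_lt (hkj i) (hjlt i)) (hjlt i)
        exact h5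
      have hUET : U = E + W := by
        rw [hUeq, hUWW, hUEdesc, hE]
        congr 1
        apply Finset.sum_congr rfl
        intro i _
        rw [hkj' i]
      exact absurd hUET (ne_of_lt hUlt)
  · -- crossNum value
    rw [crossNum_add]
    have hcE : crossNum E = ∑ i, ((j i : ℚ) / (q i : ℚ)) := by
      rw [hE, crossNum_finset_sum]
      apply Finset.sum_congr rfl
      intro i _
      rw [crossNum_replicate, horda i, mul_one_div]
    have hcW : crossNum W = w := by
      have hcongr : ∀ x ∈ W, (fun g : ((∀ i, ZMod (q i)) × ZMod n) => (1:ℚ)/(addOrderOf g : ℚ)) x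
          = (fun g : ((∀ i, ZMod (q i)) × ZMod n) => (1:ℚ)/(addOrderOf g.2 : ℚ)) x := by
        intro x hx
        have hord : addOrderOf x = addOrderOf x.2 := by
          have := addOrderOf_pair_right x.1 x.2 (funext fun i => hWdvd x hx i)
          rw [← this]
        simp only [hord]
      have : crossNum W = (W.map (fun g : ((∀ i, ZMod (q i)) × ZMod n) => (1:ℚ)/(addOrderOf g.2 : ℚ))).sum := by
        rw [crossNum, Multiset.map_congr rfl hcongr]
      rw [this, ← hcrossS, ← hcrossS', crossNum, ← hWsnd, Multiset.map_map]
      rfl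
    rw [hcE, hcW]
    ring
end main
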